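/- Let z = (z_1,…,z_d) be a random vector whose components are mutually independent, each with finite fourth moment, write μᵢ = E[zᵢ], σᵢ² = Var(zᵢ), m₃ᵢ = E[(zᵢ − μᵢ)³], and m₄ᵢ = E[(zᵢ − μᵢ)⁴]. Then for all vectors a, b ∈ ℝ^d, with U = Σᵢ aᵢ zᵢ and V = Σⱼ bⱼ zⱼ: Cov(U², V²) = 4 (Σᵢ aᵢ μᵢ)(Σⱼ bⱼ μⱼ)(Σᵢ aᵢ bᵢ σᵢ²) + 2 (Σᵢ aᵢ bᵢ σᵢ²)² + Σᵢ aᵢ² bᵢ² (m₄ᵢ − 3 σᵢ⁴) + 2 (Σᵢ aᵢ μᵢ)(Σᵢ aᵢ bᵢ² m₃ᵢ) + 2 (Σⱼ bⱼ μⱼ)(Σᵢ aᵢ² bᵢ m₃ᵢ). In particular, Cov(U², V²) is a linear combination of the second, third and fourth central moments of the zᵢ whose coefficients are polynomials in the entries of a and b. -/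

import Mathlib

/-!
Write `wᵢ = zᵢ − μᵢ`, so that `U = A + X` and `V = B + Y` with `A = ∑ aᵢμᵢ`, `B = ∑ bⱼμⱼ` and
`X = ∑ aᵢwᵢ`, `Y = ∑ bⱼwⱼ` centred. Expanding the squares,
`Cov(U², V²) = Cov(X², Y²) + 2A Cov(X, Y²) + 2B Cov(X², Y) + 4AB Cov(X, Y)`.
For centred variables, `Cov(X, Y)`, `Cov(X, Y²)` and `Cov(X², Y²) − 2 Cov(X, Y)²` are the joint
cumulants `κ(X, Y)`, `κ(X, Y, Y)` and `κ(X, X, Y, Y)`; like all cumulants they are additive when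
an independent centred pair `(P, Q)` is added to `(X, Y)`. As `(X, Y)` is the sum of the
independent pairs `(aᵢwᵢ, bᵢwᵢ)`, each of them is a sum of one-variable terms such as
`Cov((aw)², (bw)²) − 2 Cov(aw, bw)² = a²b² (m₄ − 3σ⁴)`.
-/

open MeasureTheory ProbabilityTheory

instance ENNReal.holderTriple_four_four_two : ENNReal.HolderTriple 4 4 2 :=
  ⟨by rw [← ENNReal.add_halves 2⁻¹]; norm_num [ENNReal.div_eq_inv_mul, ← ENNReal.mul_inv]⟩

section

variable {Ω : Type*} {mΩ : MeasurableSpace Ω} {μ : Measure Ω} {X Y Z P Q : Ω → ℝ}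

namespace MeasureTheory.MemLp

lemma mul_of_four (hX : MemLp X 4 μ) (hY : MemLp Y 4 μ) : MemLp (X * Y) 2 μ :=
  hY.mul hX

lemma sq_of_four (hX : MemLp X 4 μ) : MemLp (X ^ 2) 2 μ :=
  sq X ▸ hX.mul_of_four hX

lemma two_of_four [IsFiniteMeasure μ] (hX : MemLp X 4 μ) : MemLp X 2 μ :=
  hX.mono_exponent (by norm_num)

end MeasureTheory.MemLp

namespace ProbabilityTheory

lemma integral_add_sq (hY : MemLp Y 2 μ) (hZ : MemLp Z 2 μ) :
    μ[(Y + Z) ^ 2] = μ[Y ^ 2] + 2 * μ[Y * Z] + μ[Z ^ 2] := by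
  have hYY : Integrable (Y ^ 2) μ := hY.integrable_sq
  have hYZ : Integrable (Y * Z) μ := hY.integrable_mul hZ
  have hZZ : Integrable (Z ^ 2) μ := hZ.integrable_sq
  rw [show (Y + Z) ^ 2 = Y ^ 2 + Y * Z + Y * Z + Z ^ 2 by ring,
    integral_add' ((hYY.add hYZ).add hYZ) hZZ,
    integral_add' (hYY.add hYZ) hYZ, integral_add' hYY hYZ]
  ring

lemma integral_mul_add_sq (hX : MemLp X 2 μ) (hY : MemLp Y 4 μ) (hZ : MemLp Z 4 μ) :
    μ[X * (Y + Z) ^ 2] = μ[X * Y ^ 2] + 2 * μ[X * (Y * Z)] + μ[X * Z ^ 2] := by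
  have h1 : Integrable (X * Y ^ 2) μ := hX.integrable_mul hY.sq_of_four
  have h2 : Integrable (X * (Y * Z)) μ := hX.integrable_mul (hY.mul_of_four hZ)
  rw [show X * (Y + Z) ^ 2 = X * Y ^ 2 + X * (Y * Z) + X * (Y * Z) + X * Z ^ 2 by ring,
    integral_add' ((h1.add h2).add h2) (hX.integrable_mul hZ.sq_of_four),
    integral_add' (h1.add h2) h2, integral_add' h1 h2]
  ring

section

variable [IsProbabilityMeasure μ]

theorem IndepFun.covariance_add_sq_right (h : IndepFun (fun ω ↦ (X ω, Y ω)) Z μ)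
    (hX : MemLp X 2 μ) (hY : MemLp Y 4 μ) (hZ : MemLp Z 4 μ) (hZ0 : μ[Z] = 0) :
    cov[X, (Y + Z) ^ 2; μ] = cov[X, Y ^ 2; μ] := by
  have hXY_Z : IndepFun (X * Y) Z μ := h.comp (measurable_fst.mul measurable_snd) measurable_id
  have hX_ZZ : IndepFun X (Z ^ 2) μ :=
    h.comp measurable_fst (by fun_prop : Measurable fun x : ℝ ↦ x ^ 2)
  have hY_Z : IndepFun Y Z μ := h.comp measurable_snd measurable_id
  rw [covariance_eq_sub hX (hY.add hZ).sq_of_four, covariance_eq_sub hX hY.sq_of_four,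
    integral_mul_add_sq hX hY hZ, integral_add_sq hY.two_of_four hZ.two_of_four, ← mul_assoc,
    hXY_Z.integral_mul_eq_mul_integral (hX.1.mul hY.1) hZ.1,
    hX_ZZ.integral_mul_eq_mul_integral hX.1 (hZ.1.pow 2),
    hY_Z.integral_mul_eq_mul_integral hY.1 hZ.1, hZ0]
  ring

theorem IndepFun.covariance_mul_add_sq
    (h : IndepFun (fun ω ↦ (X ω, Y ω)) (fun ω ↦ (P ω, Q ω)) μ) (hX : MemLp X 4 μ)
    (hY : MemLp Y 4 μ) (hP : MemLp P 4 μ) (hQ : MemLp Q 4 μ) (hX0 : μ[X] = 0) (hP0 : μ[P] = 0) :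
    cov[X * P, (Y + Q) ^ 2; μ] = 2 * cov[X, Y; μ] * cov[P, Q; μ] := by
  have hXYY_P : IndepFun (X * Y ^ 2) P μ := by
    exact h.comp (φ := fun v : ℝ × ℝ ↦ v.1 * v.2 ^ 2) (ψ := Prod.fst) (by fun_prop) (by fun_prop)
  have hXY_PQ : IndepFun (X * Y) (P * Q) μ :=
    h.comp (φ := fun v : ℝ × ℝ ↦ v.1 * v.2) (ψ := fun v : ℝ × ℝ ↦ v.1 * v.2)
      (by fun_prop) (by fun_prop)
  have hX_PQQ : IndepFun X (P * Q ^ 2) μ := by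
    exact h.comp (φ := Prod.fst) (ψ := fun v : ℝ × ℝ ↦ v.1 * v.2 ^ 2) (by fun_prop) (by fun_prop)
  have hX_P : IndepFun X P μ := h.comp measurable_fst measurable_fst
  rw [covariance_eq_sub (hX.mul_of_four hP) (hY.add hQ).sq_of_four,
    integral_mul_add_sq (hX.mul_of_four hP) hY hQ,
    -- regroup every product as a function of `(X, Y)` times a function of `(P, Q)`
    mul_right_comm X P, mul_mul_mul_comm, mul_assoc X P,
    hXYY_P.integral_mul_eq_mul_integral (hX.1.mul (hY.1.pow 2)) hP.1,
    hXY_PQ.integral_mul_eq_mul_integral (hX.1.mul hY.1) (hP.1.mul hQ.1),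
    hX_PQQ.integral_mul_eq_mul_integral hX.1 (hP.1.mul (hQ.1.pow 2)),
    hX_P.integral_mul_eq_mul_integral hX.1 hP.1, covariance_eq_sub hX.two_of_four hY.two_of_four,
    covariance_eq_sub hP.two_of_four hQ.two_of_four, hX0, hP0]
  ring

theorem IndepFun.covariance_add_add
    (h : IndepFun (fun ω ↦ (X ω, Y ω)) (fun ω ↦ (P ω, Q ω)) μ) (hX : MemLp X 2 μ)
    (hY : MemLp Y 2 μ) (hP : MemLp P 2 μ) (hQ : MemLp Q 2 μ) :
    cov[X + P, Y + Q; μ] = cov[X, Y; μ] + cov[P, Q; μ] := by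
  have hX_Q : IndepFun X Q μ := h.comp measurable_fst measurable_snd
  have hP_Y : IndepFun P Y μ := h.symm.comp measurable_fst measurable_snd
  rw [covariance_add_left hX hP (hY.add hQ), covariance_add_right hX hY hQ,
    covariance_add_right hP hY hQ, hX_Q.covariance_eq_zero hX hQ,
    hP_Y.covariance_eq_zero hP hY]
  ring

theorem IndepFun.covariance_add_add_sq
    (h : IndepFun (fun ω ↦ (X ω, Y ω)) (fun ω ↦ (P ω, Q ω)) μ) (hX : MemLp X 2 μ)
    (hY : MemLp Y 4 μ) (hP : MemLp P 2 μ) (hQ : MemLp Q 4 μ) (hY0 : μ[Y] = 0) (hQ0 : μ[Q] = 0) :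
    cov[X + P, (Y + Q) ^ 2; μ] = cov[X, Y ^ 2; μ] + cov[P, Q ^ 2; μ] := by
  have hXY_Q : IndepFun (fun ω ↦ (X ω, Y ω)) Q μ := h.comp measurable_id measurable_snd
  have hPQ_Y : IndepFun (fun ω ↦ (P ω, Q ω)) Y μ := h.symm.comp measurable_id measurable_snd
  have hP_term : cov[P, (Y + Q) ^ 2; μ] = cov[P, Q ^ 2; μ] := by
    rw [add_comm Y Q]; exact hPQ_Y.covariance_add_sq_right hP hQ hY hY0
  rw [covariance_add_left hX hP (hY.add hQ).sq_of_four,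
    hXY_Q.covariance_add_sq_right hX hY hQ hQ0, hP_term]

theorem IndepFun.covariance_add_sq_add_sq
    (h : IndepFun (fun ω ↦ (X ω, Y ω)) (fun ω ↦ (P ω, Q ω)) μ) (hX : MemLp X 4 μ)
    (hY : MemLp Y 4 μ) (hP : MemLp P 4 μ) (hQ : MemLp Q 4 μ) (hX0 : μ[X] = 0) (hY0 : μ[Y] = 0)
    (hP0 : μ[P] = 0) (hQ0 : μ[Q] = 0) :
    cov[(X + P) ^ 2, (Y + Q) ^ 2; μ]
      = cov[X ^ 2, Y ^ 2; μ] + cov[P ^ 2, Q ^ 2; μ] + 4 * cov[X, Y; μ] * cov[P, Q; μ] := by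
  have hXXY_Q : IndepFun (fun ω ↦ ((X ^ 2) ω, Y ω)) Q μ := by
    exact h.comp (φ := fun v : ℝ × ℝ ↦ (v.1 ^ 2, v.2)) (ψ := Prod.snd) (by fun_prop) (by fun_prop)
  have hPPQ_Y : IndepFun (fun ω ↦ ((P ^ 2) ω, Q ω)) Y μ := by
    exact h.symm.comp (φ := fun v : ℝ × ℝ ↦ (v.1 ^ 2, v.2)) (ψ := Prod.snd) (by fun_prop)
      (by fun_prop)
  have hP_term : cov[P ^ 2, (Y + Q) ^ 2; μ] = cov[P ^ 2, Q ^ 2; μ] := by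
    rw [add_comm Y Q]; exact hPPQ_Y.covariance_add_sq_right hP.sq_of_four hQ hY hY0
  have hT := (hY.add hQ).sq_of_four
  rw [show (X + P) ^ 2 = X ^ 2 + P ^ 2 + (2 : ℝ) • (X * P) by ext ω; simp; ring,
    covariance_add_left (hX.sq_of_four.add hP.sq_of_four) ((hX.mul_of_four hP).const_smul 2) hT,
    covariance_add_left hX.sq_of_four hP.sq_of_four hT, covariance_smul_left,
    hXXY_Q.covariance_add_sq_right hX.sq_of_four hY hQ hQ0, hP_term,
    h.covariance_mul_add_sq hX hY hP hQ hX0 hP0]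
  ring

theorem covariance_const_add_sq_left {T : Ω → ℝ} (hX : MemLp X 4 μ) (hT : MemLp T 2 μ) (A : ℝ) :
    cov[fun ω ↦ (A + X ω) ^ 2, T; μ] = cov[X ^ 2, T; μ] + 2 * A * cov[X, T; μ] := by
  have hX2 : MemLp ((2 * A) • X) 2 μ := hX.two_of_four.const_smul _
  rw [show (fun ω ↦ (A + X ω) ^ 2) = fun ω ↦ A ^ 2 + (X ^ 2 + (2 * A) • X) ω by ext ω; simp; ring,
    covariance_const_add_left ((hX.sq_of_four.add hX2).integrable (by norm_num)),
    covariance_add_left hX.sq_of_four hX2 hT, covariance_smul_left]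

theorem covariance_const_add_sq_const_add_sq (hX : MemLp X 4 μ) (hY : MemLp Y 4 μ) (A B : ℝ) :
    cov[fun ω ↦ (A + X ω) ^ 2, fun ω ↦ (B + Y ω) ^ 2; μ]
      = cov[X ^ 2, Y ^ 2; μ] + 2 * A * cov[X, Y ^ 2; μ] + 2 * B * cov[X ^ 2, Y; μ]
        + 4 * A * B * cov[X, Y; μ] := by
  have hBY : MemLp (fun ω ↦ (B + Y ω) ^ 2) 2 μ := ((memLp_const B).add hY).sq_of_four
  rw [covariance_const_add_sq_left hX hBY, covariance_comm _ (fun ω ↦ _),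
    covariance_comm X (fun ω ↦ _), covariance_const_add_sq_left hY hX.sq_of_four,
    covariance_const_add_sq_left hY hX.two_of_four, covariance_comm (Y ^ 2), covariance_comm Y,
    covariance_comm (Y ^ 2) X, covariance_comm Y X]
  ring

end

theorem iIndepFun.indepFun_finsetSum_prodMk {ι : Type*} {w : ι → Ω → ℝ} (hw : iIndepFun w μ)
    (hmeas : ∀ i, Measurable (w i)) (a b : ι → ℝ) {s : Finset ι} {i : ι} (hi : i ∉ s) :
    IndepFun (fun ω ↦ (∑ j ∈ s, a j * w j ω, ∑ j ∈ s, b j * w j ω))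
      (fun ω ↦ (a i * w i ω, b i * w i ω)) μ := by
  let v : ι → Ω → ℝ × ℝ := fun j ω ↦ (a j * w j ω, b j * w j ω)
  have hv : iIndepFun v μ := hw.comp (fun j x ↦ (a j * x, b j * x)) fun j ↦ by fun_prop
  have hvm : ∀ j, Measurable (v j) := fun j ↦ by fun_prop
  convert hv.indepFun_finsetSum_of_notMem hvm hi using 1
  ext ω <;> simp [v, Prod.fst_sum, Prod.snd_sum]

def IsIndepAdditive (μ : Measure Ω) (Φ : (Ω → ℝ) → (Ω → ℝ) → ℝ) : Prop :=
  ∀ ⦃X Y P Q : Ω → ℝ⦄, MemLp X 4 μ → MemLp Y 4 μ → MemLp P 4 μ → MemLp Q 4 μ →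
    μ[X] = 0 → μ[Y] = 0 → μ[P] = 0 → μ[Q] = 0 →
    IndepFun (fun ω ↦ (X ω, Y ω)) (fun ω ↦ (P ω, Q ω)) μ → Φ (X + P) (Y + Q) = Φ X Y + Φ P Q

variable [IsProbabilityMeasure μ]

lemma isIndepAdditive_covariance : IsIndepAdditive μ fun X Y ↦ cov[X, Y; μ] :=
  fun _ _ _ _ hX hY hP hQ _ _ _ _ h ↦
    h.covariance_add_add hX.two_of_four hY.two_of_four hP.two_of_four hQ.two_of_four

lemma isIndepAdditive_covariance_sq : IsIndepAdditive μ fun X Y ↦ cov[X, Y ^ 2; μ] :=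
  fun _ _ _ _ hX hY hP hQ _ hY0 _ hQ0 h ↦
    h.covariance_add_add_sq hX.two_of_four hY hP.two_of_four hQ hY0 hQ0

lemma isIndepAdditive_covariance_sq_sq :
    IsIndepAdditive μ fun X Y ↦ cov[X ^ 2, Y ^ 2; μ] - 2 * cov[X, Y; μ] ^ 2 := by
  intro X Y P Q hX hY hP hQ hX0 hY0 hP0 hQ0 h
  beta_reduce
  rw [h.covariance_add_sq_add_sq hX hY hP hQ hX0 hY0 hP0 hQ0,
    h.covariance_add_add hX.two_of_four hY.two_of_four hP.two_of_four hQ.two_of_four]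
  ring

section Family

variable {ι : Type*} {w : ι → Ω → ℝ}

theorem IsIndepAdditive.apply_finsetSum {Φ : (Ω → ℝ) → (Ω → ℝ) → ℝ} (hΦ : IsIndepAdditive μ Φ)
    (hΦ0 : Φ 0 0 = 0) (hw : iIndepFun w μ) (hmeas : ∀ i, Measurable (w i))
    (h4 : ∀ i, MemLp (w i) 4 μ) (h0 : ∀ i, μ[w i] = 0) (a b : ι → ℝ) (s : Finset ι) :
    Φ (fun ω ↦ ∑ i ∈ s, a i * w i ω) (fun ω ↦ ∑ i ∈ s, b i * w i ω)
      = ∑ i ∈ s, Φ (fun ω ↦ a i * w i ω) (fun ω ↦ b i * w i ω) := by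
  classical
  have hmem : ∀ (c : ι → ℝ) (t : Finset ι), MemLp (fun ω ↦ ∑ i ∈ t, c i * w i ω) 4 μ :=
    fun c t ↦ memLp_finsetSum t fun i _ ↦ (h4 i).const_mul (c i)
  have hcen : ∀ (c : ι → ℝ) (t : Finset ι), μ[fun ω ↦ ∑ i ∈ t, c i * w i ω] = 0 := by
    intro c t
    rw [integral_finsetSum t fun i _ ↦ ((h4 i).integrable (by norm_num)).const_mul (c i)]
    simp [integral_const_mul, h0]
  induction s using Finset.induction_on with
  | empty => simp only [Finset.sum_empty]; exact hΦ0
  | insert i s hi ih =>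
    have hsplit : ∀ c : ι → ℝ, (fun ω ↦ ∑ j ∈ insert i s, c j * w j ω)
        = (fun ω ↦ ∑ j ∈ s, c j * w j ω) + fun ω ↦ c i * w i ω := fun c ↦ by
      ext ω; simp [Finset.sum_insert hi, add_comm]
    rw [hsplit a, hsplit b, hΦ (hmem a s) (hmem b s) ((h4 i).const_mul _) ((h4 i).const_mul _)
      (hcen a s) (hcen b s) (by simp [integral_const_mul, h0]) (by simp [integral_const_mul, h0])
      (hw.indepFun_finsetSum_prodMk hmeas a b hi), ih, Finset.sum_insert hi, add_comm]

variable [Fintype ι] (hw : iIndepFun w μ) (hmeas : ∀ i, Measurable (w i))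
  (h4 : ∀ i, MemLp (w i) 4 μ) (h0 : ∀ i, μ[w i] = 0) (a b : ι → ℝ)
include hw hmeas h4 h0

theorem iIndepFun.covariance_fun_sum_fun_sum :
    cov[fun ω ↦ ∑ i, a i * w i ω, fun ω ↦ ∑ i, b i * w i ω; μ] = ∑ i, a i * b i * Var[w i; μ] := by
  rw [isIndepAdditive_covariance.apply_finsetSum (by simp) hw hmeas h4 h0 a b]
  refine Finset.sum_congr rfl fun i _ ↦ ?_
  rw [covariance_const_mul_left, covariance_const_mul_right,
    covariance_self (hmeas i).aemeasurable]
  ring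

theorem iIndepFun.covariance_fun_sum_sq :
    cov[fun ω ↦ ∑ i, a i * w i ω, (fun ω ↦ ∑ i, b i * w i ω) ^ 2; μ]
      = ∑ i, a i * b i ^ 2 * μ[w i ^ 3] := by
  rw [isIndepAdditive_covariance_sq.apply_finsetSum (by simp) hw hmeas h4 h0 a b]
  refine Finset.sum_congr rfl fun i _ ↦ ?_
  rw [show (fun ω ↦ b i * w i ω) ^ 2 = fun ω ↦ b i ^ 2 * (w i ^ 2) ω by ext ω; simp [mul_pow],
    covariance_const_mul_left, covariance_const_mul_right,
    covariance_eq_sub (h4 i).two_of_four (h4 i).sq_of_four, h0, ← pow_succ']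
  ring

theorem iIndepFun.covariance_fun_sum_sq_fun_sum_sq :
    cov[(fun ω ↦ ∑ i, a i * w i ω) ^ 2, (fun ω ↦ ∑ i, b i * w i ω) ^ 2; μ]
      = 2 * (∑ i, a i * b i * Var[w i; μ]) ^ 2
        + ∑ i, a i ^ 2 * b i ^ 2 * (μ[w i ^ 4] - 3 * Var[w i; μ] ^ 2) := by
  have h := isIndepAdditive_covariance_sq_sq.apply_finsetSum (by simp) hw hmeas h4 h0 a b .univ
  beta_reduce at h
  rw [hw.covariance_fun_sum_fun_sum hmeas h4 h0, sub_eq_iff_eq_add'] at h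
  rw [h]
  congr 1
  refine Finset.sum_congr rfl fun i _ ↦ ?_
  have hsq : ∀ c : ℝ, (fun ω ↦ c * w i ω) ^ 2 = fun ω ↦ c ^ 2 * (w i ^ 2) ω := fun c ↦ by
    ext ω; simp [mul_pow]
  rw [hsq, hsq, covariance_const_mul_left, covariance_const_mul_right, covariance_const_mul_left,
    covariance_const_mul_right, covariance_self (hmeas i).aemeasurable,
    covariance_eq_sub (h4 i).sq_of_four (h4 i).sq_of_four,
    variance_of_integral_eq_zero (hmeas i).aemeasurable (h0 i), ← pow_add]
  simp only [Pi.pow_apply]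
  ring

theorem iIndepFun.covariance_const_add_sum_sq_const_add_sum_sq (A B : ℝ) :
    cov[fun ω ↦ (A + ∑ i, a i * w i ω) ^ 2, fun ω ↦ (B + ∑ i, b i * w i ω) ^ 2; μ]
      = 4 * A * B * (∑ i, a i * b i * Var[w i; μ]) + 2 * (∑ i, a i * b i * Var[w i; μ]) ^ 2
        + ∑ i, a i ^ 2 * b i ^ 2 * (μ[w i ^ 4] - 3 * Var[w i; μ] ^ 2)
        + 2 * A * ∑ i, a i * b i ^ 2 * μ[w i ^ 3] + 2 * B * ∑ i, a i ^ 2 * b i * μ[w i ^ 3] := by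
  have hmemLp : ∀ c : ι → ℝ, MemLp (fun ω ↦ ∑ i, c i * w i ω) 4 μ :=
    fun c ↦ memLp_finsetSum _ fun i _ ↦ (h4 i).const_mul (c i)
  have h3 : cov[(fun ω ↦ ∑ i, a i * w i ω) ^ 2, fun ω ↦ ∑ i, b i * w i ω; μ]
      = ∑ i, a i ^ 2 * b i * μ[w i ^ 3] := by
    rw [covariance_comm, hw.covariance_fun_sum_sq hmeas h4 h0 b a]
    exact Finset.sum_congr rfl fun i _ ↦ by ring
  rw [covariance_const_add_sq_const_add_sq (hmemLp a) (hmemLp b),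
    hw.covariance_fun_sum_sq_fun_sum_sq hmeas h4 h0, hw.covariance_fun_sum_sq hmeas h4 h0, h3,
    hw.covariance_fun_sum_fun_sum hmeas h4 h0]
  ring

end Family

end ProbabilityTheory

end

/-- For a random vector `z` with mutually independent components having finite
fourth moments, writing `μᵢ = E[zᵢ]`, `σᵢ² = Var(zᵢ)`, `m₃ᵢ = E[(zᵢ − μᵢ)³]` and
`m₄ᵢ = E[(zᵢ − μᵢ)⁴]`, for all `a b ∈ ℝᵈ`, with `U = ∑ᵢ aᵢ zᵢ`, `V = ∑ⱼ bⱼ zⱼ` and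
`Cov(U², V²) = E[U² V²] − E[U²] E[V²]`:
`Cov(U², V²) = 4 (∑ᵢ aᵢ μᵢ)(∑ⱼ bⱼ μⱼ)(∑ᵢ aᵢ bᵢ σᵢ²) + 2 (∑ᵢ aᵢ bᵢ σᵢ²)²
  + ∑ᵢ aᵢ² bᵢ² (m₄ᵢ − 3 σᵢ⁴) + 2 (∑ᵢ aᵢ μᵢ)(∑ᵢ aᵢ bᵢ² m₃ᵢ) + 2 (∑ⱼ bⱼ μⱼ)(∑ᵢ aᵢ² bᵢ m₃ᵢ)`. -/
theorem cov_square_with_square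
    {Ω : Type*} {mΩ : MeasurableSpace Ω} (μ : Measure Ω) [IsProbabilityMeasure μ]
    {d : ℕ} (z : Fin d → Ω → ℝ)
    (hmeas : ∀ i, Measurable (z i))
    (hL4 : ∀ i, MemLp (z i) 4 μ)
    (hindep : iIndepFun z μ)
    (a b : Fin d → ℝ) :
    (∫ ω, (∑ i, a i * z i ω) ^ 2 * (∑ j, b j * z j ω) ^ 2 ∂μ)
        - (∫ ω, (∑ i, a i * z i ω) ^ 2 ∂μ) * (∫ ω, (∑ j, b j * z j ω) ^ 2 ∂μ)
      = 4 * (∑ i, a i * ∫ x, z i x ∂μ) * (∑ j, b j * ∫ x, z j x ∂μ)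
            * (∑ i, a i * b i * variance (z i) μ)
        + 2 * (∑ i, a i * b i * variance (z i) μ) ^ 2
        + (∑ i, (a i) ^ 2 * (b i) ^ 2
            * ((∫ ω, (z i ω - ∫ x, z i x ∂μ) ^ 4 ∂μ) - 3 * (variance (z i) μ) ^ 2))
        + 2 * (∑ i, a i * ∫ x, z i x ∂μ)
            * (∑ i, a i * (b i) ^ 2 * ∫ ω, (z i ω - ∫ x, z i x ∂μ) ^ 3 ∂μ)
        + 2 * (∑ j, b j * ∫ x, z j x ∂μ)
            * (∑ i, (a i) ^ 2 * b i * ∫ ω, (z i ω - ∫ x, z i x ∂μ) ^ 3 ∂μ) := by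
  set w : Fin d → Ω → ℝ := fun i ω ↦ z i ω - ∫ x, z i x ∂μ
  have hw : iIndepFun w μ :=
    hindep.comp (fun i x ↦ x - ∫ x, z i x ∂μ) fun i ↦ measurable_id.sub_const _
  have hwmeas : ∀ i, Measurable (w i) := fun i ↦ (hmeas i).sub_const _
  have hw4 : ∀ i, MemLp (w i) 4 μ := fun i ↦ (hL4 i).sub (memLp_const _)
  have hw0 : ∀ i, μ[w i] = 0 := fun i ↦ by
    simp [w, integral_sub ((hL4 i).integrable (by norm_num)) (integrable_const _)]
  have hvar : ∀ i, Var[w i; μ] = variance (z i) μ :=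
    fun i ↦ variance_sub_const (hmeas i).aestronglyMeasurable _
  have hmoment : ∀ i (n : ℕ), μ[w i ^ n] = ∫ ω, (z i ω - ∫ x, z i x ∂μ) ^ n ∂μ := fun _ _ ↦ rfl
  have hsplit : ∀ (c : Fin d → ℝ) ω,
      ∑ i, c i * z i ω = ∑ i, c i * ∫ x, z i x ∂μ + ∑ i, c i * w i ω :=
    fun c ω ↦ by simp [w, mul_sub]
  have hsq : ∀ c : Fin d → ℝ, MemLp (fun ω ↦ (∑ i, c i * z i ω) ^ 2) 2 μ :=
    fun c ↦ (memLp_finsetSum _ fun i _ ↦ (hL4 i).const_mul (c i)).sq_of_four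
  have hcov := covariance_eq_sub (hsq a) (hsq b)
  simp only [Pi.mul_apply] at hcov
  rw [← hcov]
  simp only [hsplit]
  rw [hw.covariance_const_add_sum_sq_const_add_sum_sq hwmeas hw4 hw0]
  simp only [hvar, hmoment]
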